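/- Let G(F̆) be a reductive group over the completion F̆ of the maximal unramified extension, with Iwahori subgroup Ĭ, Iwahori-Weyl group W̃, and Frobenius σ. For w ∈ W̃ and a σ-conjugacy class 𝒪 of W̃, define the class polynomials F_{w,𝒪} ∈ ℤ[q] as follows: if w is minimal in its σ-conjugacy class, then F_{w,𝒪} = 1 if w ∈ 𝒪 and F_{w,𝒪} = 0 otherwise; and if w ≈_σ w' and s ∈ S̃ with s w' σ(s) < w', then F_{w,𝒪} = (q−1)F_{sw',𝒪} + q F_{sw'σ(s),𝒪}. Then, viewed as polynomials in (q−1), all coefficients of F_{w,𝒪} are nonnegative integers. -/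
import Mathlib


open scoped Classical
open Polynomial

variable {Wt : Type*} [Group Wt]

/-- A step of `≈_σ`: a length-preserving `σ`-twisted conjugation by a simple reflection
or by a length-zero element. -/
def ApproxStep (ℓ : Wt → ℕ) (σ : Wt →* Wt) (S : Set Wt) (w w' : Wt) : Prop :=
  ∃ u : Wt, w' = u * w * (σ u)⁻¹ ∧ ℓ w' = ℓ w ∧ (u ∈ S ∨ ℓ u = 0)

/-- The relation `≈_σ`. -/
def Approx (ℓ : Wt → ℕ) (σ : Wt →* Wt) (S : Set Wt) : Wt → Wt → Prop :=
  Relation.ReflTransGen (ApproxStep ℓ σ S)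

/-- `w` has minimal length in its `σ`-twisted conjugacy class. -/
def IsSigmaMin (ℓ : Wt → ℕ) (σ : Wt →* Wt) (w : Wt) : Prop :=
  ∀ x : Wt, ℓ w ≤ ℓ (x * w * (σ x)⁻¹)

/-- `𝒪` is a `σ`-twisted conjugacy class. -/
def SigmaClass (σ : Wt →* Wt) (𝒪 : Set Wt) : Prop :=
  ∃ w : Wt, 𝒪 = {v | ∃ x : Wt, v = x * w * (σ x)⁻¹}

private lemma X_mul_coeff_nonneg {p : Polynomial ℤ} (h : ∀ k, 0 ≤ p.coeff k) (m : ℕ) :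
    0 ≤ (X * p).coeff m := by
  cases m with
  | zero => simp [Polynomial.mul_coeff_zero]
  | succ n => rw [Polynomial.coeff_X_mul]; exact h n

/-- Let `W̃` be the Iwahori–Weyl group with length `ℓ`, Frobenius `σ` and
simple reflections `S`, and let `F : (w, 𝒪) ↦ F_{w,𝒪} ∈ ℤ[q]` be the class polynomials,
defined by `F_{w,𝒪} = 1` or `0` for `w` minimal in its `σ`-twisted conjugacy class
(according to whether `w ∈ 𝒪`), and by the recursion
`F_{w,𝒪} = (q−1) F_{s w',𝒪} + q F_{s w' σ(s),𝒪}` whenever `w ≈_σ w'` and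
`s w' σ(s) < w'`. Then, viewed as polynomials in `q − 1`, all coefficients of the
`F_{w,𝒪}` are nonnegative integers. -/
theorem class_polynomial_coeffs_nonneg
    (ℓ : Wt → ℕ) (σ : Wt →* Wt) (S : Set Wt)
    (hS : ∀ s ∈ S, s * s = 1 ∧ ℓ s = 1) (hσS : ∀ s ∈ S, σ s ∈ S)
    (F : Wt → Set Wt → Polynomial ℤ)
    (hmin : ∀ w : Wt, IsSigmaMin ℓ σ w → ∀ 𝒪 : Set Wt, SigmaClass σ 𝒪 →
      F w 𝒪 = if w ∈ 𝒪 then 1 else 0)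
    (hrec : ∀ w : Wt, ¬ IsSigmaMin ℓ σ w → ∃ w' s, s ∈ S ∧ Approx ℓ σ S w w' ∧
      ℓ (s * w') < ℓ w' ∧ ℓ (s * w' * σ s) < ℓ w' ∧
      ∀ 𝒪 : Set Wt, F w 𝒪 = (X - 1) * F (s * w') 𝒪 + X * F (s * w' * σ s) 𝒪)
    (w : Wt) (𝒪 : Set Wt) (h𝒪 : SigmaClass σ 𝒪) (m : ℕ) :
    0 ≤ ((F w 𝒪).comp (X + 1)).coeff m := by
  suffices H : ∀ n : ℕ, ∀ w : Wt, ℓ w = n → ∀ m : ℕ,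
      0 ≤ ((F w 𝒪).comp (X + 1)).coeff m from H (ℓ w) w rfl m
  intro n
  induction n using Nat.strong_induction_on with
  | _ n ih =>
  intro w hn m
  by_cases hw : IsSigmaMin ℓ σ w
  · rw [hmin w hw 𝒪 h𝒪]
    split
    · rw [Polynomial.one_comp, Polynomial.coeff_one]
      split <;> norm_num
    · simp
  · obtain ⟨w', s, hsS, happ, h1, h2, hF⟩ := hrec w hw
    have hlen : ℓ w' = ℓ w := by
      clear hn h1 h2 hF
      induction happ with
      | refl => rfl
      | tail _ step ih' =>
        obtain ⟨u, _, he, _⟩ := step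
        rw [he, ih']
    have key : ∀ v : Wt, ℓ v < n → ∀ k, 0 ≤ ((F v 𝒪).comp (X + 1)).coeff k := by
      intro v hv k
      exact ih (ℓ v) hv v rfl k
    have hlt1 : ℓ (s * w') < n := by rw [← hn, ← hlen]; exact h1
    have hlt2 : ℓ (s * w' * σ s) < n := by rw [← hn, ← hlen]; exact h2
    rw [hF 𝒪]
    have expand : ((X - 1) * F (s * w') 𝒪 + X * F (s * w' * σ s) 𝒪).comp (X + 1)
        = X * (F (s * w') 𝒪).comp (X + 1)
          + (X * (F (s * w' * σ s) 𝒪).comp (X + 1) + (F (s * w' * σ s) 𝒪).comp (X + 1)) := by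
      simp [Polynomial.add_comp, Polynomial.mul_comp, Polynomial.sub_comp,
        Polynomial.X_comp, Polynomial.one_comp]
      ring
    rw [expand, Polynomial.coeff_add, Polynomial.coeff_add]
    have a1 := X_mul_coeff_nonneg (key _ hlt1) m
    have a2 := X_mul_coeff_nonneg (key _ hlt2) m
    have a3 := key _ hlt2 m
    linarith
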